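/- arXiv:2405.01766 — 5 statements merged into one kernel-verified Lean document; each statement's English description precedes it below -/
import Mathlib

section
/- Let (p,q) be a Hölder conjugate pair with p > 1 and q > 1. For each i ∈ ℕ let a_i = (a_{i,j})_{j=1}^∞ ∈ ℓ^p and let b_i be a scalar, and consider the linear equation L_i(x) = ∑_{j=1}^∞ a_{i,j} x_j = b_i. Let M > 0. If for every finite subset S of ℕ there exists x_S ∈ ℓ^q with ‖x_S‖_q ≤ M and L_i(x_S) = b_i for all i ∈ S, then there exists x ∈ ℓ^q with ‖x‖_q ≤ M and L_i(x) = b_i for all i ∈ ℕ. -/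
open scoped ENNReal

open Filter Topology

/-!
Viewed inside `𝕜^ℕ` with the product topology, the closed `M`-ball of `ℓ^q` is compact: it is
cut out by the closed conditions `∑_{j ∈ s} |x_j|^q ≤ M^q` for finite `s` and sits inside a
product of closed discs. On this ball each functional `x ↦ ∑ a_j x_j` is a uniform limit of its
finite partial sums, because by Hölder the error is at most `M` times the `ℓ^p` norm of a tail
of `a`; so it is continuous there. The solution sets of the equations are therefore closed
subsets of a compact set with the finite intersection property.
-/

theorem IsCompact.exists_mem_forall_eq {X Y ι : Type*} [TopologicalSpace X] [T2Space X]
    [TopologicalSpace Y] [T1Space Y] {K : Set X} (hK : IsCompact K) {L : ι → X → Y}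
    (hL : ∀ i, ContinuousOn (L i) K) (b : ι → Y)
    (h : ∀ S : Finset ι, ∃ x ∈ K, ∀ i ∈ S, L i x = b i) :
    ∃ x ∈ K, ∀ i, L i x = b i := by
  have hclosed (i : ι) : IsClosed (K ∩ L i ⁻¹' {b i}) :=
    (hL i).preimage_isClosed_of_isClosed hK.isClosed isClosed_singleton
  obtain ⟨x, hxK, hx⟩ := hK.inter_iInter_nonempty _ hclosed fun S => by
    obtain ⟨x, hxK, hx⟩ := h S
    exact ⟨x, hxK, Set.mem_iInter₂.2 fun i hi => ⟨hxK, hx i hi⟩⟩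
  exact ⟨x, hxK, fun i => (Set.mem_iInter.1 hx i).2⟩

namespace lp

variable {α : Type*} {E : α → Type*} [∀ i, NormedAddCommGroup (E i)] {q : ℝ≥0∞} {M : ℝ}

theorem coe_image_norm_le_eq (hq : 0 < q.toReal) (hM : 0 ≤ M) :
    (⇑) '' {x : lp E q | ‖x‖ ≤ M} =
      {f : ∀ i, E i | ∀ s : Finset α, ∑ i ∈ s, ‖f i‖ ^ q.toReal ≤ M ^ q.toReal} := by
  ext f
  constructor
  · rintro ⟨x, hx, rfl⟩ s
    exact (sum_rpow_le_norm_rpow hq x s).trans (Real.rpow_le_rpow (norm_nonneg' x) hx hq.le)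
  · intro hf
    exact ⟨⟨f, memℓp_gen' hf⟩, norm_le_of_forall_sum_le hq hM hf, rfl⟩

theorem isCompact_coe_image_norm_le [∀ i, ProperSpace (E i)] (hq : 0 < q.toReal) :
    IsCompact ((⇑) '' {x : lp E q | ‖x‖ ≤ M} : Set (∀ i, E i)) := by
  rcases lt_or_ge M 0 with hM | hM
  · convert isCompact_empty
    exact Set.image_eq_empty.2 <| Set.eq_empty_of_forall_notMem fun x hx =>
      (norm_nonneg' x).not_gt (hx.trans_lt hM)
  have hsub : (⇑) '' {x : lp E q | ‖x‖ ≤ M} ⊆ Set.univ.pi fun i => Metric.closedBall 0 M := by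
    rintro - ⟨x, hx, rfl⟩ i -
    exact mem_closedBall_zero_iff.2 <|
      (norm_apply_le_norm (ENNReal.toReal_pos_iff.1 hq).1.ne' x i).trans hx
  refine (isCompact_univ_pi fun _ => isCompact_closedBall 0 M).of_isClosed_subset ?_ hsub
  rw [coe_image_norm_le_eq hq hM, Set.ofPred_forall]
  exact isClosed_iInter fun s => isClosed_le (continuous_finsetSum _ fun i _ =>
    (continuous_apply i).norm.rpow_const fun _ => Or.inr hq.le) continuous_const

variable {𝕜 : Type*} [RCLike 𝕜] {p : ℝ≥0∞}

theorem norm_tsum_mul_le (hpq : p.toReal.HolderConjugate q.toReal) (a : lp (fun _ : α => 𝕜) p)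
    (x : lp (fun _ : α => 𝕜) q) : ‖∑' i, a i * x i‖ ≤ ‖a‖ * ‖x‖ := by
  have h := lp.tsum_mul_le_mul_norm hpq a x
  simp only [← norm_mul] at h
  exact (norm_tsum_le_tsum_norm h.1).trans h.2

theorem tsum_mul_sub_sum_mul [DecidableEq α] (hpq : p.toReal.HolderConjugate q.toReal)
    (a : lp (fun _ : α => 𝕜) p) (x : lp (fun _ : α => 𝕜) q) (s : Finset α) :
    ∑' i, a i * x i - ∑ i ∈ s, a i * x i =
      ∑' i, (a - ∑ j ∈ s, lp.single p j (a j)) i * x i := by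
  have hsum : Summable fun i => a i * x i :=
    .of_norm <| by simpa only [norm_mul] using lp.summable_mul hpq a x
  have hfin : ∀ i ∉ s, (if i ∈ s then a i else 0) * x i = 0 := fun i hi => by simp [hi]
  simp only [coeFn_sub, coeFn_sum, Pi.sub_apply, Finset.sum_apply, lp.single_apply,
    Finset.sum_pi_single, sub_mul]
  rw [hsum.tsum_sub (summable_of_ne_finset_zero hfin), tsum_eq_sum hfin]
  simp only [ite_mul, zero_mul, Finset.sum_ite_mem, Finset.inter_self]

theorem continuousOn_tsum_mul (hpq : p.toReal.HolderConjugate q.toReal)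
    (a : lp (fun _ : α => 𝕜) p) :
    ContinuousOn (fun f : α → 𝕜 => ∑' i, a i * f i)
      ((⇑) '' {x : lp (fun _ : α => 𝕜) q | ‖x‖ ≤ M}) := by
  classical
  have : p.HolderConjugate q := .of_toReal hpq
  have : Fact (1 ≤ p) := ⟨ENNReal.HolderConjugate.one_le p q⟩
  have hp : p ≠ ∞ := (ENNReal.toReal_pos_iff.1 hpq.pos).2.ne
  have htail :
      Tendsto (fun s : Finset α => ‖a - ∑ j ∈ s, lp.single p j (a j)‖ * M) atTop (𝓝 0) := by
    simpa [norm_sub_rev] using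
      (tendsto_iff_norm_sub_tendsto_zero.1 (lp.hasSum_single hp a)).mul_const M
  have hunif : TendstoUniformlyOn (fun s f => ∑ i ∈ s, a i * f i) (fun f => ∑' i, a i * f i)
      atTop ((⇑) '' {x : lp (fun _ : α => 𝕜) q | ‖x‖ ≤ M}) := by
    refine Metric.tendstoUniformlyOn_iff.2 fun ε hε => ?_
    filter_upwards [htail.eventually_lt_const hε] with s hs
    rintro - ⟨x, hx, rfl⟩
    calc dist (∑' i, a i * x i) (∑ i ∈ s, a i * x i)
        = ‖∑' i, (a - ∑ j ∈ s, lp.single p j (a j)) i * x i‖ := by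
          rw [dist_eq_norm, tsum_mul_sub_sum_mul hpq]
      _ ≤ ‖a - ∑ j ∈ s, lp.single p j (a j)‖ * M :=
          (norm_tsum_mul_le hpq _ x).trans (mul_le_mul_of_nonneg_left hx (norm_nonneg' _))
      _ < ε := hs
  exact hunif.continuousOn <| .of_forall fun s =>
    (continuous_finsetSum _ fun i _ => continuous_const.mul (continuous_apply i)).continuousOn

end lp

theorem abian_eslami_general {𝕜 : Type*} [RCLike 𝕜] (p q : ℝ≥0∞)
    (hp' : p ≠ ∞) (hq' : q ≠ ∞)
    (hpq : 1 / p + 1 / q = 1)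
    (a : ℕ → ℕ → 𝕜) (ha : ∀ i, Memℓp (a i) p) (b : ℕ → 𝕜)
    (M : ℝ)
    (hfin : ∀ S : Finset ℕ, ∃ x : lp (fun _ : ℕ => 𝕜) q,
      ‖x‖ ≤ M ∧ ∀ i ∈ S, ∑' j : ℕ, a i j * x j = b i) :
    ∃ x : lp (fun _ : ℕ => 𝕜) q, ‖x‖ ≤ M ∧ ∀ i : ℕ, ∑' j : ℕ, a i j * x j = b i := by
  have : p.HolderConjugate q := ENNReal.holderConjugate_iff.2 (by simpa only [one_div] using hpq)
  have hpq' : p.toReal.HolderConjugate q.toReal := ENNReal.HolderConjugate.toReal_of_ne_top hp' hq'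
  obtain ⟨-, ⟨x, hxM, rfl⟩, hx⟩ :=
    (lp.isCompact_coe_image_norm_le hpq'.symm.pos).exists_mem_forall_eq
      (fun i => lp.continuousOn_tsum_mul hpq' ⟨a i, ha i⟩) b fun S => by
        obtain ⟨x, hxM, hx⟩ := hfin S
        exact ⟨x, ⟨x, hxM, rfl⟩, hx⟩
  exact ⟨x, hxM, hx⟩

/-- **Abian–Eslami theorem.** Let `(p,q)` be a Hölder conjugate pair with `p > 1` and
`q > 1`.  For each `i ∈ ℕ` let `a i ∈ ℓ^p` and consider the linear equation
`L_i(x) = ∑' j, a i j * x j = b i`.  If for every finite subset `S` of `ℕ` there is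
`x_S ∈ ℓ^q` with `‖x_S‖_q ≤ M` solving the equations indexed by `S`, then there is
`x ∈ ℓ^q` with `‖x‖_q ≤ M` solving all of the equations. -/
theorem abian_eslami {𝕜 : Type*} [RCLike 𝕜] (p q : ℝ≥0∞)
    (hp : 1 < p) (hp' : p ≠ ∞) (hq : 1 < q) (hq' : q ≠ ∞)
    (hpq : 1 / p + 1 / q = 1)
    (a : ℕ → ℕ → 𝕜) (ha : ∀ i, Memℓp (a i) p) (b : ℕ → 𝕜)
    (M : ℝ) (hM : 0 < M)
    (hfin : ∀ S : Finset ℕ, ∃ x : lp (fun _ : ℕ => 𝕜) q,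
      ‖x‖ ≤ M ∧ ∀ i ∈ S, ∑' j : ℕ, a i j * x j = b i) :
    ∃ x : lp (fun _ : ℕ => 𝕜) q, ‖x‖ ≤ M ∧ ∀ i : ℕ, ∑' j : ℕ, a i j * x j = b i :=
  abian_eslami_general p q hp' hq' hpq a ha b M hfin
end

section
/- Let (p,q) be a Hölder conjugate pair and let I be an infinite set. For each i ∈ I let a_i = (a_{i,j})_{j=1}^∞ ∈ ℓ^p and let b_i be a scalar, and consider the linear equation L_i(x) = ∑_{j=1}^∞ a_{i,j} x_j = b_i. Let M > 0. If for every finite subset S of I and every ε > 0 the finite set of inequalities {|L_i(x) − b_i| ≤ ε : i ∈ S} has a solution x_{S,ε} ∈ ℓ^q with ‖x_{S,ε}‖_q ≤ M, then the infinite set of equations {L_i(x) = b_i : i ∈ I} has an exact solution x ∈ ℓ^q with ‖x‖_q ≤ M. -/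
/-
Inside `𝕜^ℕ` with the product topology, the image of the closed `M`-ball of `ℓ^q` is compact: it
lies in a product of compact balls, and it is closed because the `ℓ^q` norm can only drop under
pointwise limits. On this set every `L_i` is continuous, being the uniform limit of its finite
partial sums: since `p < ∞`, the truncations of `a_i` converge to `a_i` in `ℓ^p`, and Hölder's
inequality bounds the remainder by `‖a_i - truncation‖_p * M`. A cluster point of the approximate
solutions `x_{S, 1/(n+1)}`, along the directed set of pairs `(S, n)`, is then an exact solution.
-/

open scoped ENNReal

/-- `(p, q)` is a Hölder conjugate pair: either `p > 1` and `q > 1` are (finite) real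
numbers with `1/p + 1/q = 1`, or `p = 1` and `q = ∞`. -/
def IsHolderConjugatePair (p q : ℝ≥0∞) : Prop :=
  (1 < p ∧ p ≠ ∞ ∧ 1 < q ∧ q ≠ ∞ ∧ 1 / p + 1 / q = 1) ∨ (p = 1 ∧ q = ∞)

open Filter Topology Metric

theorem exists_forall_eq_of_forall_finset_dist_le {X I E : Type*} [TopologicalSpace X]
    [CompactSpace X] [MetricSpace E] {L : I → X → E} (hL : ∀ i, Continuous (L i)) {b : I → E}
    (h : ∀ (S : Finset I) (ε : ℝ), 0 < ε → ∃ x, ∀ i ∈ S, dist (L i x) (b i) ≤ ε) :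
    ∃ x, ∀ i, L i x = b i := by
  classical
  choose x hx using fun σ : Finset I × ℕ => h σ.1 (1 / (σ.2 + 1)) Nat.one_div_pos_of_nat
  obtain ⟨x₀, hx₀⟩ := exists_clusterPt_of_compactSpace (map x atTop)
  refine ⟨x₀, fun i => ?_⟩
  have hε : Tendsto (fun σ : Finset I × ℕ => 1 / ((σ.2 : ℝ) + 1)) atTop (𝓝 0) :=
    tendsto_one_div_add_atTop_nhds_zero_nat.comp (tendsto_snd.mono_left prod_atTop_atTop_eq.ge)
  have hconv : Tendsto (fun σ => L i (x σ)) atTop (𝓝 (b i)) := by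
    refine tendsto_iff_dist_tendsto_zero.2 (squeeze_zero' (.of_forall fun _ => dist_nonneg) ?_ hε)
    filter_upwards [eventually_ge_atTop ({i}, 0)] with σ hσ
    exact hx σ i (Finset.singleton_subset_iff.1 hσ.1)
  exact eq_of_nhds_neBot (hx₀.map (hL i).continuousAt (tendsto_map'_iff.2 hconv))

theorem lp.isCompact_image_coe_closedBall {α : Type*} {E : α → Type*}
    [∀ i, NormedAddCommGroup (E i)] [∀ i, ProperSpace (E i)] {q : ℝ≥0∞} [Fact (1 ≤ q)] (M : ℝ) :
    IsCompact ((fun x : lp E q => (x : ∀ i, E i)) '' closedBall 0 M) := by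
  have hq : q ≠ 0 := (zero_lt_one.trans_le Fact.out).ne'
  refine (isCompact_univ_pi fun i => isCompact_closedBall (0 : E i) M).of_isClosed_subset
    (isClosed_of_closure_subset fun f hf => ?_) ?_
  · let l := comap (fun x : closedBall (0 : lp E q) M => ⇑(x : lp E q)) (𝓝 f)
    have : l.NeBot := comap_neBot fun t ht => by
      obtain ⟨_, hft, x, hx, rfl⟩ := mem_closure_iff_nhds.1 hf t ht
      exact ⟨⟨x, hx⟩, hft⟩
    have hlim : Tendsto (id fun x : closedBall (0 : lp E q) M => ⇑(x : lp E q)) l (𝓝 f) :=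
      tendsto_comap
    have hbdd : Bornology.IsBounded (Set.range ((↑) : closedBall (0 : lp E q) M → lp E q)) := by
      rw [Subtype.range_coe]
      exact isBounded_closedBall
    refine ⟨⟨f, lp.memℓp_of_tendsto hbdd hlim⟩, mem_closedBall_zero_iff.2 ?_, rfl⟩
    exact lp.norm_le_of_tendsto (.of_forall fun x => mem_closedBall_zero_iff.1 x.2) hlim
  · rintro _ ⟨x, hx, rfl⟩ i -
    exact mem_closedBall_zero_iff.2
      ((lp.norm_apply_le_norm hq x i).trans (mem_closedBall_zero_iff.1 hx))

section MulPairing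

variable {α 𝕜 : Type*} [RCLike 𝕜] {p q : ℝ≥0∞} [Fact (1 ≤ p)] [Fact (1 ≤ q)] [p.HolderConjugate q]

variable (p q) in
noncomputable def lp.mulPairing : lp (fun _ : α => 𝕜) p →L[𝕜] lp (fun _ : α => 𝕜) q →L[𝕜] 𝕜 :=
  lp.dualPairing p q (fun _ => ContinuousLinearMap.mul 𝕜 𝕜) (K := 1)
    fun _ => ContinuousLinearMap.opNorm_mul_le 𝕜 𝕜

theorem lp.mulPairing_apply (a : lp (fun _ : α => 𝕜) p) (x : lp (fun _ : α => 𝕜) q) :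
    lp.mulPairing p q a x = ∑' j, a j * x j :=
  rfl

theorem lp.norm_mulPairing_le (a : lp (fun _ : α => 𝕜) p) (x : lp (fun _ : α => 𝕜) q) :
    ‖lp.mulPairing p q a x‖ ≤ ‖a‖ * ‖x‖ :=
  calc ‖lp.mulPairing p q a x‖ ≤ ‖lp.mulPairing (α := α) (𝕜 := 𝕜) p q‖ * ‖a‖ * ‖x‖ :=
        ContinuousLinearMap.le_opNorm₂ _ a x
    _ ≤ 1 * ‖a‖ * ‖x‖ := by gcongr; exact lp.norm_dualPairing _ _
    _ = ‖a‖ * ‖x‖ := by rw [one_mul]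

theorem lp.mulPairing_single [DecidableEq α] (j : α) (c : 𝕜) (x : lp (fun _ : α => 𝕜) q) :
    lp.mulPairing p q (lp.single p j c) x = c * x j := by
  simp [lp.mulPairing_apply, Pi.single_apply]

theorem lp.continuousOn_tsum_mul_s1 (hp : p ≠ ∞) (a : lp (fun _ : α => 𝕜) p) (M : ℝ) :
    ContinuousOn (fun x : α → 𝕜 => ∑' j, a j * x j)
      ((fun x : lp (fun _ : α => 𝕜) q => (x : α → 𝕜)) '' closedBall 0 M) := by
  classical
  set trunc : Finset α → lp (fun _ : α => 𝕜) p := fun s => ∑ j ∈ s, lp.single p j (a j)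
  have htrunc : Tendsto (fun s => ‖a - trunc s‖ * M) atTop (𝓝 0) := by
    have := (tendsto_iff_norm_sub_tendsto_zero.1 (lp.hasSum_single hp a)).mul_const M
    simpa only [norm_sub_rev, zero_mul, SummationFilter.unconditional_filter] using this
  have hpair : ∀ s x, lp.mulPairing p q (trunc s) x = ∑ j ∈ s, a j * x j := fun s x => by
    simp only [trunc, map_sum, FunLike.coe_sum, Finset.sum_apply, lp.mulPairing_single]
  have hunif : TendstoUniformlyOn (fun s (x : α → 𝕜) => ∑ j ∈ s, a j * x j)
      (fun x => ∑' j, a j * x j) atTop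
      ((fun x : lp (fun _ : α => 𝕜) q => (x : α → 𝕜)) '' closedBall 0 M) := by
    refine Metric.tendstoUniformlyOn_iff.2 fun ε hε => ?_
    filter_upwards [htrunc.eventually (gt_mem_nhds hε)] with s hs
    rintro _ ⟨x, hx, rfl⟩
    calc dist (∑' j, a j * x j) (∑ j ∈ s, a j * x j)
        = ‖lp.mulPairing p q (a - trunc s) x‖ := by
          rw [dist_eq_norm, ← hpair, ← lp.mulPairing_apply, ContinuousLinearMap.map_sub₂]
      _ ≤ ‖a - trunc s‖ * ‖x‖ := lp.norm_mulPairing_le _ _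
      _ ≤ ‖a - trunc s‖ * M := by gcongr; exact mem_closedBall_zero_iff.1 hx
      _ < ε := hs
  exact hunif.continuousOn (.of_forall fun s => (continuous_finsetSum _ fun j _ =>
    continuous_const.mul (continuous_apply j)).continuousOn)

end MulPairing

theorem IsHolderConjugatePair.holderConjugate {p q : ℝ≥0∞} (h : IsHolderConjugatePair p q) :
    p.HolderConjugate q := by
  rcases h with ⟨-, -, -, -, h⟩ | ⟨rfl, rfl⟩
  · exact ENNReal.holderConjugate_iff.2 (by simpa only [one_div] using h)
  · infer_instance

theorem IsHolderConjugatePair.ne_top {p q : ℝ≥0∞} (h : IsHolderConjugatePair p q) : p ≠ ∞ := by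
  rcases h with ⟨-, h, -⟩ | ⟨rfl, -⟩
  exacts [h, ENNReal.one_ne_top]

theorem linear_approx_implies_exact_general {𝕜 : Type*} [RCLike 𝕜] (p q : ℝ≥0∞)
    (hpq : IsHolderConjugatePair p q)
    (I : Type*)
    (a : I → ℕ → 𝕜) (ha : ∀ i, Memℓp (a i) p) (b : I → 𝕜)
    (M : ℝ)
    (hfin : ∀ (S : Finset I) (ε : ℝ), 0 < ε →
      ∃ x : lp (fun _ : ℕ => 𝕜) q,
        ‖x‖ ≤ M ∧ ∀ i ∈ S, ‖(∑' j : ℕ, a i j * x j) - b i‖ ≤ ε) :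
    ∃ x : lp (fun _ : ℕ => 𝕜) q, ‖x‖ ≤ M ∧ ∀ i : I, ∑' j : ℕ, a i j * x j = b i := by
  have hconj := hpq.holderConjugate
  have : Fact (1 ≤ p) := ⟨hconj.one_le⟩
  have : Fact (1 ≤ q) := ⟨hconj.symm.one_le⟩
  set K := (fun x : lp (fun _ : ℕ => 𝕜) q => (x : ℕ → 𝕜)) '' closedBall 0 M
  have : CompactSpace K := isCompact_iff_compactSpace.1 (lp.isCompact_image_coe_closedBall M)
  obtain ⟨⟨_, x, hx, rfl⟩, hxsol⟩ := exists_forall_eq_of_forall_finset_dist_le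
    (L := fun i (y : K) => ∑' j, a i j * y.1 j) (b := b)
    (fun i => (lp.continuousOn_tsum_mul_s1 hpq.ne_top ⟨a i, ha i⟩ M).domRestrict) fun S ε hε => by
      obtain ⟨x, hxM, hxS⟩ := hfin S ε hε
      exact ⟨⟨x, x, mem_closedBall_zero_iff.2 hxM, rfl⟩, by simpa only [dist_eq_norm] using hxS⟩
  exact ⟨x, mem_closedBall_zero_iff.1 hx, hxsol⟩

/-- Let `(p,q)` be a Hölder conjugate pair and `I` an infinite set.  For each `i ∈ I`
let `a i ∈ ℓ^p` and consider the linear equation `L_i(x) = ∑' j, a i j * x j = b i`.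
If for every finite `S ⊆ I` and every `ε > 0` the inequalities `‖L_i(x) - b i‖ ≤ ε`
(`i ∈ S`) have a solution `x ∈ ℓ^q` with `‖x‖_q ≤ M`, then the full infinite system of
equations has an exact solution `x ∈ ℓ^q` with `‖x‖_q ≤ M`. -/
theorem linear_approx_implies_exact {𝕜 : Type*} [RCLike 𝕜] (p q : ℝ≥0∞)
    (hpq : IsHolderConjugatePair p q)
    (I : Type*) [Infinite I]
    (a : I → ℕ → 𝕜) (ha : ∀ i, Memℓp (a i) p) (b : I → 𝕜)
    (M : ℝ) (hM : 0 < M)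
    (hfin : ∀ (S : Finset I) (ε : ℝ), 0 < ε →
      ∃ x : lp (fun _ : ℕ => 𝕜) q,
        ‖x‖ ≤ M ∧ ∀ i ∈ S, ‖(∑' j : ℕ, a i j * x j) - b i‖ ≤ ε) :
    ∃ x : lp (fun _ : ℕ => 𝕜) q, ‖x‖ ≤ M ∧ ∀ i : I, ∑' j : ℕ, a i j * x j = b i :=
  linear_approx_implies_exact_general p q hpq I a ha b M hfin
end

section
/- Let D be a positive integer, let D < q ≤ ∞, and let I be an infinite set. For each i ∈ I and d ∈ {1,…,D} let a_{i,d} = (a_{i,d,j})_{j=1}^∞ ∈ ℓ^{q/(q−d)}, and let P_i(x) = ∑_{k=1}^D ∑_{(d_1,…,d_k) ∈ D_k} (a_{i,d_1}, x^{d_1})(a_{i,d_2}, x^{d_2})⋯(a_{i,d_k}, x^{d_k}) be the associated multiplicative polynomial, where (a_{i,d}, x^d) = ∑_{j=1}^∞ a_{i,d,j} x_j^d. Let M > 0 and let (b_i)_{i∈I} be scalars. If for every finite subset S of I the finite set of polynomial equations {P_i(x) = b_i : i ∈ S} has a solution x_S ∈ ℓ^q with ‖x_S‖_q ≤ M, then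 the infinite set of polynomial equations {P_i(x) = b_i : i ∈ I} has a solution x ∈ ℓ^q with ‖x‖_q ≤ M. -/
open scoped ENNReal

/-- The exponent `q/(q-d)`, interpreted as `1` when `q = ∞`, so that `q/(q-d)` and
`q/d` form a Hölder conjugate pair whenever `d < q`. -/
noncomputable def holderExponent (q : ℝ≥0∞) (d : ℕ) : ℝ≥0∞ :=
  if q = ∞ then 1 else q / (q - d)

/-- `𝒟_k`: the (finite) set of `k`-tuples `(d_1, …, d_k)` of positive integers with
`d_1 + ⋯ + d_k ≤ D`. -/
def degreeTuples (D k : ℕ) : Finset (Fin k → ℕ) :=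
  (Fintype.piFinset fun _ => Finset.Icc 1 D).filter fun Δ => ∑ l, Δ l ≤ D

/-- The multiplicative polynomial of degree at most `D` determined by the sequences
`a d = (a d j)_j`, `d ∈ {1, …, D}`:
`P(x) = ∑_{k=1}^D ∑_{(d_1,…,d_k) ∈ 𝒟_k} (a_{d_1}, x^{d_1}) ⋯ (a_{d_k}, x^{d_k})`
where `(a_d, x^d) = ∑' j, a d j * x j ^ d`. -/
noncomputable def mulPoly {𝕜 : Type*} [RCLike 𝕜] (D : ℕ) (a : ℕ → ℕ → 𝕜) (x : ℕ → 𝕜) : 𝕜 :=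
  ∑ k ∈ Finset.Icc 1 D, ∑ Δ ∈ degreeTuples D k,
    ∏ l : Fin k, ∑' j : ℕ, a (Δ l) j * x j ^ (Δ l)

/-!
Inside `ℕ → 𝕜` with the product topology, the closed `M`-ball of `ℓ^q` is compact: it lies in the
compact product of closed balls of `𝕜`, and the `ℓ^q` norm is lower semicontinuous for pointwise
convergence. On this ball each pairing `x ↦ ∑ a_j x_j^d` is continuous, since by Hölder's inequality
its tail beyond `N` is at most `‖(a_j)_{j ≥ N}‖_{q/(q-d)} M^d`, so the partial sums converge
uniformly. Hence every `P_i` is continuous on the ball, and the limit of the finite solutions `x_S`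
along an ultrafilter on the finite subsets of `I` solves all the equations at once.
-/

open Filter Topology

section Pairing

variable {𝕜 : Type*} [RCLike 𝕜] {q : ℝ≥0∞} {d : ℕ}

lemma holderConjugate_holderExponent (hd : 0 < d) (hdq : (d : ℝ≥0∞) < q) (hq : q ≠ ∞) :
    (holderExponent q d).toReal.HolderConjugate (q.toReal / d) := by
  have hd' : (0 : ℝ) < d := by exact_mod_cast hd
  have hdq' : (d : ℝ) < q.toReal := by
    simpa using (ENNReal.toReal_lt_toReal (ENNReal.natCast_ne_top d) hq).2 hdq
  refine ((Real.holderConjugate_iff_eq_conjExponent ?_).2 ?_).symm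
  · rwa [one_lt_div hd']
  · rw [holderExponent, if_neg hq, ENNReal.toReal_div, ENNReal.toReal_sub_of_le hdq.le hq,
      ENNReal.toReal_natCast]
    field_simp

lemma holderExponent_toReal_pos (hd : 0 < d) (hdq : (d : ℝ≥0∞) < q) :
    0 < (holderExponent q d).toReal := by
  rcases eq_or_ne q ∞ with rfl | hq
  · simp [holderExponent]
  · exact (holderConjugate_holderExponent hd hdq hq).pos

noncomputable def tailNorm (r : ℝ) (a : ℕ → 𝕜) (N : ℕ) : ℝ :=
  (∑' j, ‖a (j + N)‖ ^ r) ^ (1 / r)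

lemma tendsto_tailNorm_atTop {r : ℝ} (hr : 0 < r) (a : ℕ → 𝕜) :
    Tendsto (tailNorm r a) atTop (𝓝 0) := by
  have h := (tendsto_sum_nat_add fun j => ‖a j‖ ^ r).rpow_const (p := 1 / r)
    (Or.inr (by positivity))
  rwa [Real.zero_rpow (one_div_pos.2 hr).ne'] at h

/-- Hölder's inequality with the exponents `q / (q - d)` and `q / d`. -/
lemma summable_and_tsum_norm_mul_pow_nat_add_le (hd : 0 < d) (hdq : (d : ℝ≥0∞) < q)
    {a : ℕ → 𝕜} (ha : Memℓp a (holderExponent q d)) (w : lp (fun _ : ℕ => 𝕜) q) (N : ℕ) :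
    (Summable fun j => ‖a (j + N)‖ * ‖w (j + N)‖ ^ d) ∧
      ∑' j, ‖a (j + N)‖ * ‖w (j + N)‖ ^ d ≤
        tailNorm (holderExponent q d).toReal a N * ‖w‖ ^ d := by
  rcases eq_or_ne q ∞ with rfl | hq
  · have hsum : Summable fun j => ‖a (j + N)‖ := by
      rw [summable_nat_add_iff (f := fun j => ‖a j‖)]
      simpa [holderExponent] using ha.summable (by simp [holderExponent])
    have hle : ∀ j, ‖a (j + N)‖ * ‖w (j + N)‖ ^ d ≤ ‖a (j + N)‖ * ‖w‖ ^ d := fun j => by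
      gcongr
      exact lp.norm_apply_le_norm ENNReal.top_ne_zero w _
    refine ⟨(hsum.mul_right _).of_nonneg_of_le (fun j => by positivity) hle, ?_⟩
    calc ∑' j, ‖a (j + N)‖ * ‖w (j + N)‖ ^ d ≤ ∑' j, ‖a (j + N)‖ * ‖w‖ ^ d :=
          ((hsum.mul_right _).of_nonneg_of_le (fun j => by positivity) hle).tsum_le_tsum hle
            (hsum.mul_right _)
      _ = _ := by simp [tailNorm, holderExponent, tsum_mul_right]
  · have hq0 : 0 < q.toReal := ENNReal.toReal_pos (zero_le.trans_lt hdq).ne' hq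
    have hpq := holderConjugate_holderExponent hd hdq hq
    have hpow : ∀ j, (‖w j‖ ^ d) ^ (q.toReal / d) = ‖w j‖ ^ q.toReal := fun j => by
      rw [← Real.rpow_natCast, ← Real.rpow_mul (norm_nonneg _), mul_div_cancel₀]
      exact_mod_cast hd.ne'
    have hw : Summable fun j => ‖w j‖ ^ q.toReal := (lp.memℓp w).summable hq0
    have hw_tail : Summable fun j => (‖w (j + N)‖ ^ d) ^ (q.toReal / d) := by
      simpa only [hpow] using (summable_nat_add_iff (f := fun j => ‖w j‖ ^ q.toReal) N).2 hw
    obtain ⟨hsum, hle⟩ := Real.summable_and_inner_le_Lp_mul_Lq_tsum_of_nonneg hpq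
      (fun j => norm_nonneg _) (fun j => by positivity)
      ((summable_nat_add_iff (f := fun j => ‖a j‖ ^ _) N).2 (ha.summable hpq.pos)) hw_tail
    refine ⟨hsum, hle.trans (mul_le_mul_of_nonneg_left ?_ (by positivity))⟩
    calc (∑' j, (‖w (j + N)‖ ^ d) ^ (q.toReal / d)) ^ (1 / (q.toReal / d))
        ≤ (∑' j, ‖w j‖ ^ q.toReal) ^ (1 / (q.toReal / d)) := by
          simp only [hpow]
          exact Real.rpow_le_rpow (tsum_nonneg fun j => by positivity)
            (tsum_comp_le_tsum_of_inj hw (fun j => by positivity) (add_left_injective N))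
            (by positivity)
      _ = ‖w‖ ^ d := by
          rw [← lp.norm_rpow_eq_tsum hq0, ← Real.rpow_mul (lp.norm_nonneg' _), one_div_div,
            mul_div_cancel₀ _ hq0.ne', Real.rpow_natCast]

lemma tendstoUniformlyOn_sum_range_mul_pow (hd : 0 < d) (hdq : (d : ℝ≥0∞) < q)
    {a : ℕ → 𝕜} (ha : Memℓp a (holderExponent q d)) (M : ℝ) :
    TendstoUniformlyOn (fun N (x : ℕ → 𝕜) => ∑ j ∈ Finset.range N, a j * x j ^ d)
      (fun x => ∑' j, a j * x j ^ d) atTop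
      ((⇑) '' {w : lp (fun _ : ℕ => 𝕜) q | ‖w‖ ≤ M}) := by
  set r := (holderExponent q d).toReal
  rw [Metric.tendstoUniformlyOn_iff]
  intro ε hε
  have hlim : Tendsto (fun N => tailNorm r a N * M ^ d) atTop (𝓝 0) := by
    simpa using (tendsto_tailNorm_atTop (holderExponent_toReal_pos hd hdq) a).mul_const (M ^ d)
  filter_upwards [hlim.eventually (gt_mem_nhds hε)] with N hN
  rintro _ ⟨w, hw, rfl⟩
  have hnorm (n : ℕ) : Summable fun j => ‖a (j + n) * w (j + n) ^ d‖ := by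
    simpa only [norm_mul, norm_pow] using
      (summable_and_tsum_norm_mul_pow_nat_add_le hd hdq ha w n).1
  have hsum : Summable fun j => a j * w j ^ d := by simpa using (hnorm 0).of_norm
  rw [dist_eq_norm, ← hsum.sum_add_tsum_nat_add N, add_sub_cancel_left]
  calc ‖∑' j, a (j + N) * w (j + N) ^ d‖ ≤ ∑' j, ‖a (j + N)‖ * ‖w (j + N)‖ ^ d := by
        simpa only [norm_mul, norm_pow] using norm_tsum_le_tsum_norm (hnorm N)
    _ ≤ tailNorm r a N * ‖w‖ ^ d := (summable_and_tsum_norm_mul_pow_nat_add_le hd hdq ha w N).2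
    _ ≤ tailNorm r a N * M ^ d := by
        gcongr
        · exact Real.rpow_nonneg (tsum_nonneg fun j => by positivity) _
        · exact lp.norm_nonneg' w
        · exact hw
    _ < ε := hN

lemma continuousOn_tsum_mul_pow (hd : 0 < d) (hdq : (d : ℝ≥0∞) < q)
    {a : ℕ → 𝕜} (ha : Memℓp a (holderExponent q d)) (M : ℝ) :
    ContinuousOn (fun x : ℕ → 𝕜 => ∑' j, a j * x j ^ d)
      ((⇑) '' {w : lp (fun _ : ℕ => 𝕜) q | ‖w‖ ≤ M}) :=
  (tendstoUniformlyOn_sum_range_mul_pow hd hdq ha M).continuousOn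
    (Frequently.of_forall fun _ => Continuous.continuousOn (by fun_prop))

lemma continuousOn_mulPoly {D : ℕ} (hDq : (D : ℝ≥0∞) < q) {a : ℕ → ℕ → 𝕜}
    (ha : ∀ d ∈ Finset.Icc 1 D, Memℓp (a d) (holderExponent q d)) (M : ℝ) :
    ContinuousOn (mulPoly D a) ((⇑) '' {w : lp (fun _ : ℕ => 𝕜) q | ‖w‖ ≤ M}) := by
  refine continuousOn_finsetSum _ fun k _ => continuousOn_finsetSum _ fun Δ hΔ =>
    continuousOn_finsetProd _ fun l _ => ?_
  have hΔl : Δ l ∈ Finset.Icc 1 D := by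
    rw [degreeTuples, Finset.mem_filter, Fintype.mem_piFinset] at hΔ
    exact hΔ.1 l
  have hd := Finset.mem_Icc.1 hΔl
  exact continuousOn_tsum_mul_pow hd.1 ((Nat.cast_le.2 hd.2).trans_lt hDq) (ha _ hΔl) M

end Pairing

theorem multiplicative_finite_implies_infinite_general {𝕜 : Type*} [RCLike 𝕜]
    (D : ℕ) (hD : 0 < D) (q : ℝ≥0∞) (hq : (D : ℝ≥0∞) < q)
    (I : Type*)
    (a : I → ℕ → ℕ → 𝕜)
    (ha : ∀ i, ∀ d ∈ Finset.Icc 1 D, Memℓp (a i d) (holderExponent q d))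
    (b : I → 𝕜) (M : ℝ)
    (hfin : ∀ S : Finset I, ∃ x : lp (fun _ : ℕ => 𝕜) q,
      ‖x‖ ≤ M ∧ ∀ i ∈ S, mulPoly D (a i) (fun j => x j) = b i) :
    ∃ x : lp (fun _ : ℕ => 𝕜) q,
      ‖x‖ ≤ M ∧ ∀ i : I, mulPoly D (a i) (fun j => x j) = b i := by
  have : Fact (1 ≤ q) := ⟨le_trans (by exact_mod_cast hD) hq.le⟩
  choose x hxM hx using hfin
  have hx_pi (S : Finset I) : ⇑(x S) ∈ Set.univ.pi fun _ => Metric.closedBall (0 : 𝕜) M :=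
    fun j _ => mem_closedBall_zero_iff.2 <|
      (lp.norm_apply_le_norm (zero_lt_one.trans_le Fact.out).ne' _ j).trans (hxM S)
  let U := Ultrafilter.of (atTop : Filter (Finset I))
  obtain ⟨y, -, hy⟩ := (isCompact_univ_pi fun _ : ℕ => isCompact_closedBall (0 : 𝕜) M)
    |>.ultrafilter_le_nhds (U.map fun S => ⇑(x S)) (tendsto_principal.2 (.of_forall hx_pi))
  have hlim : Tendsto (fun S => ⇑(x S)) (U : Filter (Finset I)) (𝓝 y) := hy
  let Y : lp (fun _ : ℕ => 𝕜) q := ⟨y, lp.memℓp_of_tendsto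
    (isBounded_iff_forall_norm_le.2 ⟨M, Set.forall_mem_range.2 hxM⟩) hlim⟩
  have hYM : ‖Y‖ ≤ M := lp.norm_le_of_tendsto (Eventually.of_forall hxM) hlim
  have hball {w : lp (fun _ : ℕ => 𝕜) q} (hw : ‖w‖ ≤ M) :
      ⇑w ∈ (⇑) '' {w : lp (fun _ : ℕ => 𝕜) q | ‖w‖ ≤ M} := ⟨w, hw, rfl⟩
  refine ⟨Y, hYM, fun i => ?_⟩
  have hP : Tendsto (fun S => mulPoly D (a i) (x S)) (U : Filter (Finset I))
      (𝓝 (mulPoly D (a i) Y)) :=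
    (continuousOn_mulPoly hq (ha i) M _ (hball hYM)).tendsto.comp
      (tendsto_nhdsWithin_iff.2 ⟨hlim, .of_forall fun S => hball (hxM S)⟩)
  have hb : ∀ᶠ S in (U : Filter (Finset I)), mulPoly D (a i) (x S) = b i :=
    Ultrafilter.of_le atTop <| (eventually_ge_atTop {i}).mono fun S hS =>
      hx S i (Finset.singleton_subset_iff.1 hS)
  exact tendsto_nhds_unique hP (tendsto_const_nhds.congr' (hb.mono fun _ h => h.symm))

/-- "Finitely solvable implies infinitely solvable" for multiplicative polynomial
equations: if every finite subsystem `{P_i(x) = b_i : i ∈ S}` has a solution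
`x_S ∈ ℓ^q` with `‖x_S‖_q ≤ M`, then the infinite system `{P_i(x) = b_i : i ∈ I}`
has a solution `x ∈ ℓ^q` with `‖x‖_q ≤ M`. -/
theorem multiplicative_finite_implies_infinite {𝕜 : Type*} [RCLike 𝕜]
    (D : ℕ) (hD : 0 < D) (q : ℝ≥0∞) (hq : (D : ℝ≥0∞) < q)
    (I : Type*) [Infinite I]
    (a : I → ℕ → ℕ → 𝕜)
    (ha : ∀ i, ∀ d ∈ Finset.Icc 1 D, Memℓp (a i d) (holderExponent q d))
    (b : I → 𝕜) (M : ℝ) (hM : 0 < M)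
    (hfin : ∀ S : Finset I, ∃ x : lp (fun _ : ℕ => 𝕜) q,
      ‖x‖ ≤ M ∧ ∀ i ∈ S, mulPoly D (a i) (fun j => x j) = b i) :
    ∃ x : lp (fun _ : ℕ => 𝕜) q,
      ‖x‖ ≤ M ∧ ∀ i : I, mulPoly D (a i) (fun j => x j) = b i :=
  multiplicative_finite_implies_infinite_general D hD q hq I a ha b M hfin
end

section
/- Let D be a positive integer, let D < q ≤ ∞, and let I be an infinite set. For each i ∈ I and d ∈ {1,…,D} let a_{i,d} = (a_{i,d,j})_{j=1}^∞ ∈ ℓ^{q/(q−d)}, and let P_i(x) = ∑_{k=1}^D ∑_{(d_1,…,d_k) ∈ D_k} (a_{i,d_1}, x^{d_1})⋯(a_{i,d_k}, x^{d_k}) be the associated multiplicative polynomial, where (a_{i,d}, x^d) = ∑_{j=1}^∞ a_{i,d,j} x_j^d. Let (b_i)_{i∈I} be scalars and let m = (m_j)_{j=1}^∞ ∈ ℓ^q with m_j ≥ 0 for all j. If for every ε > 0 and every finite subset S of I the finite set of polynomial inequalities {|P_i(x) − b_i| ≤ ε : i ∈ S} has a solution x_{S,ε} = (x_{S,ε,j})_{j=1}^∞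 ∈ ℓ^q with |x_{S,ε,j}| ≤ m_j for all j ∈ ℕ, then the infinite set of polynomial equations {P_i(x) = b_i : i ∈ I} has an exact solution x = (x_j)_{j=1}^∞ ∈ ℓ^q with |x_j| ≤ m_j for all j ∈ ℕ. -/
open scoped ENNReal

/-! By Hölder, `∑ j, ‖a_{i,d,j}‖ ‖m_j‖^d < ∞`, so every series `(a_{i,d}, x^d)` converges
uniformly on the box `{x | ∀ j, ‖x j‖ ≤ m j}` and each `P_i` is continuous there. The box is
compact in the product topology, and the closed sets `{x ∈ box | ‖P_i(x) - b_i‖ ≤ 1/(n+1)}` have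
the finite intersection property, so they share a point; it solves every equation and lies in
`ℓ^q` because it is dominated by `m`. -/

theorem holderTriple_holderExponent {q : ℝ≥0∞} {d : ℕ} (hdq : (d : ℝ≥0∞) < q) :
    (holderExponent q d).HolderTriple (q / d) 1 := by
  refine ⟨?_⟩
  rcases eq_or_ne q ∞ with rfl | hq
  · simp [holderExponent, ENNReal.top_div_of_ne_top (ENNReal.natCast_ne_top d)]
  · have hq0 : q ≠ 0 := (pos_of_gt hdq).ne'
    rw [holderExponent, if_neg hq, ENNReal.inv_div (.inr hq) (.inr hq0),
      ENNReal.inv_div (.inl (ENNReal.natCast_ne_top d)) (.inr hq0), ENNReal.div_add_div_same,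
      tsub_add_cancel_of_le hdq.le, ENNReal.div_self hq0 hq, inv_one]

theorem Memℓp.norm_pow {ι E : Type*} [NormedAddCommGroup E] {p : ℝ≥0∞} {f : ι → E}
    (hf : Memℓp f p) {n : ℕ} (hn : n ≠ 0) : Memℓp (fun i => ‖f i‖ ^ n) (p / n) := by
  obtain rfl | rfl | hp := p.trichotomy
  · simpa [memℓp_zero_iff, hn] using hf
  · rw [ENNReal.top_div_of_ne_top (ENNReal.natCast_ne_top n)]
    obtain ⟨C, hC⟩ := memℓp_infty_iff.mp hf
    refine memℓp_infty ⟨C ^ n, ?_⟩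
    rintro _ ⟨i, rfl⟩
    simpa using pow_le_pow_left₀ (norm_nonneg _) (hC ⟨i, rfl⟩) n
  · have hpn : (p / n).toReal = p.toReal / n := by simp [ENNReal.toReal_div]
    have hpn_pos : 0 < (p / n).toReal := by rw [hpn]; positivity
    rw [memℓp_gen_iff hpn_pos, hpn]
    convert (memℓp_gen_iff hp).mp hf using 2 with i
    rw [_root_.norm_pow, norm_norm, ← Real.rpow_natCast, ← Real.rpow_mul (norm_nonneg _)]
    field_simp

theorem summable_norm_mul_norm_pow {ι 𝕜 F : Type*} [RCLike 𝕜] [NormedAddCommGroup F]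
    {q : ℝ≥0∞} {d : ℕ} (hd : d ≠ 0) (hdq : (d : ℝ≥0∞) < q) {c : ι → 𝕜}
    (hc : Memℓp c (holderExponent q d)) {m : ι → F} (hm : Memℓp m q) :
    Summable fun j => ‖c j‖ * ‖m j‖ ^ d := by
  have := holderTriple_holderExponent hdq
  refine Memℓp.summable_of_one (hc.norm.holder 1 (hm.norm_pow hd)
    (fun _ => ContinuousLinearMap.mul ℝ ℝ) (K := 1) fun _ => ?_)
  exact ContinuousLinearMap.opNorm_mul_le ℝ ℝ

def normBox {ι E : Type*} [Norm E] (r : ι → ℝ) : Set (ι → E) :=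
  {x | ∀ j, ‖x j‖ ≤ r j}

theorem isCompact_normBox {ι E : Type*} [NormedAddCommGroup E] [ProperSpace E] (r : ι → ℝ) :
    IsCompact (normBox r : Set (ι → E)) := by
  convert isCompact_univ_pi fun j => isCompact_closedBall (0 : E) (r j)
  ext x
  simp [normBox]

theorem continuousOn_tsum_mul_pow_s4 {ι 𝕜 : Type*} [RCLike 𝕜] {c : ι → 𝕜} {r : ι → ℝ} {d : ℕ}
    (hs : Summable fun j => ‖c j‖ * r j ^ d) :
    ContinuousOn (fun x : ι → 𝕜 => ∑' j, c j * x j ^ d) (normBox r) := by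
  refine continuousOn_tsum (fun j => by fun_prop) hs fun j x hx => ?_
  rw [norm_mul, norm_pow]
  gcongr
  exact hx j

theorem mem_Icc_of_mem_degreeTuples {D k : ℕ} {Δ : Fin k → ℕ} (hΔ : Δ ∈ degreeTuples D k)
    (l : Fin k) : Δ l ∈ Finset.Icc 1 D :=
  Fintype.mem_piFinset.mp (Finset.mem_filter.mp hΔ).1 l

theorem continuousOn_mulPoly_s4 {𝕜 : Type*} [RCLike 𝕜] {D : ℕ} {a : ℕ → ℕ → 𝕜} {r : ℕ → ℝ}
    (ha : ∀ d ∈ Finset.Icc 1 D, Summable fun j => ‖a d j‖ * r j ^ d) :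
    ContinuousOn (mulPoly D a) (normBox r) :=
  continuousOn_finsetSum _ fun _ _ => continuousOn_finsetSum _ fun _ hΔ =>
    continuousOn_finsetProd _ fun l _ =>
      continuousOn_tsum_mul_pow_s4 (ha _ (mem_Icc_of_mem_degreeTuples hΔ l))

theorem IsCompact.exists_forall_eq_of_forall_approx {X ι E : Type*} [TopologicalSpace X]
    [T2Space X] [NormedAddCommGroup E] {K : Set X} (hK : IsCompact K) {f : ι → X → E}
    (hf : ∀ i, ContinuousOn (f i) K) (b : ι → E)
    (happrox : ∀ ε : ℝ, 0 < ε → ∀ S : Finset ι, ∃ x ∈ K, ∀ i ∈ S, ‖f i x - b i‖ ≤ ε) :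
    ∃ x ∈ K, ∀ i, f i x = b i := by
  classical
  let C : ι × ℕ → Set X := fun p => K ∩ (fun x => ‖f p.1 x - b p.1‖) ⁻¹' Set.Iic (1 / (p.2 + 1))
  have hC : ∀ p, IsClosed (C p) := fun p =>
    ((hf p.1).sub continuousOn_const).norm.preimage_isClosed_of_isClosed hK.isClosed isClosed_Iic
  obtain ⟨x, hxK, hx⟩ := hK.inter_iInter_nonempty C hC fun u => by
    obtain ⟨x, hxK, hxu⟩ := happrox (1 / (u.sup Prod.snd + 1)) (by positivity) (u.image Prod.fst)
    refine ⟨x, hxK, Set.mem_iInter₂.mpr fun p hp => ⟨hxK, ?_⟩⟩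
    refine (hxu p.1 (Finset.mem_image_of_mem _ hp)).trans ?_
    gcongr
    exact_mod_cast Finset.le_sup (f := Prod.snd) hp
  refine ⟨x, hxK, fun i => sub_eq_zero.mp (norm_le_zero_iff.mp ?_)⟩
  exact ge_of_tendsto' tendsto_one_div_add_atTop_nhds_zero_nat fun n =>
    (Set.mem_iInter.mp hx (i, n)).2

theorem multiplicative_approx_implies_exact_seq_bound_general {𝕜 : Type*} [RCLike 𝕜]
    (D : ℕ) (q : ℝ≥0∞) (hq : (D : ℝ≥0∞) < q)
    (I : Type*)
    (a : I → ℕ → ℕ → 𝕜)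
    (ha : ∀ i, ∀ d ∈ Finset.Icc 1 D, Memℓp (a i d) (holderExponent q d))
    (b : I → 𝕜)
    (m : ℕ → ℝ) (hm : Memℓp m q)
    (hfin : ∀ (ε : ℝ), 0 < ε → ∀ S : Finset I,
      ∃ x : ℕ → 𝕜, Memℓp x q ∧ (∀ j, ‖x j‖ ≤ m j) ∧
        ∀ i ∈ S, ‖mulPoly D (a i) x - b i‖ ≤ ε) :
    ∃ x : ℕ → 𝕜, Memℓp x q ∧ (∀ j, ‖x j‖ ≤ m j) ∧
      ∀ i : I, mulPoly D (a i) x = b i := by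
  have hsum : ∀ i, ∀ d ∈ Finset.Icc 1 D, Summable fun j => ‖a i d j‖ * ‖m j‖ ^ d := by
    intro i d hd
    obtain ⟨hd1, hdD⟩ := Finset.mem_Icc.mp hd
    exact summable_norm_mul_norm_pow (by omega) ((Nat.cast_le.mpr hdD).trans_lt hq) (ha i d hd) hm
  have hcont : ∀ i, ContinuousOn (mulPoly D (a i)) (normBox m) := fun i =>
    (continuousOn_mulPoly_s4 (hsum i)).mono fun x hx j => (hx j).trans (Real.le_norm_self _)
  obtain ⟨x, hxm, hx⟩ := (isCompact_normBox m).exists_forall_eq_of_forall_approx hcont b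
    fun ε hε S => by
      obtain ⟨x, -, hxm, hxS⟩ := hfin ε hε S
      exact ⟨x, hxm, hxS⟩
  exact ⟨x, hm.mono hxm, hxm, hx⟩

/-- Refinement of the main theorem with a sequential bound: if `m ∈ ℓ^q` has
nonnegative terms and for every `ε > 0` and finite `S ⊆ I` the inequalities
`{‖P_i(x) - b_i‖ ≤ ε : i ∈ S}` have a solution `x ∈ ℓ^q` with `‖x j‖ ≤ m j` for all
`j`, then the infinite system `{P_i(x) = b_i : i ∈ I}` has an exact solution
`x ∈ ℓ^q` with `‖x j‖ ≤ m j` for all `j`. -/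
theorem multiplicative_approx_implies_exact_seq_bound {𝕜 : Type*} [RCLike 𝕜]
    (D : ℕ) (hD : 0 < D) (q : ℝ≥0∞) (hq : (D : ℝ≥0∞) < q)
    (I : Type*) [Infinite I]
    (a : I → ℕ → ℕ → 𝕜)
    (ha : ∀ i, ∀ d ∈ Finset.Icc 1 D, Memℓp (a i d) (holderExponent q d))
    (b : I → 𝕜)
    (m : ℕ → ℝ) (hm : Memℓp m q) (hm0 : ∀ j, 0 ≤ m j)
    (hfin : ∀ (ε : ℝ), 0 < ε → ∀ S : Finset I,
      ∃ x : ℕ → 𝕜, Memℓp x q ∧ (∀ j, ‖x j‖ ≤ m j) ∧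
        ∀ i ∈ S, ‖mulPoly D (a i) x - b i‖ ≤ ε) :
    ∃ x : ℕ → 𝕜, Memℓp x q ∧ (∀ j, ‖x j‖ ≤ m j) ∧
      ∀ i : I, mulPoly D (a i) x = b i :=
  multiplicative_approx_implies_exact_seq_bound_general D q hq I a ha b m hm hfin
end

section
/- Let (p,q) be a Hölder conjugate pair and let M > 0. Let a_i = (a_{i,j})_{j=1}^∞ ∈ ℓ^p for all i ∈ ℕ and let (b_i)_{i∈ℕ} be a sequence of scalars. Suppose that for every r ∈ ℕ and all scalars h_1,…,h_r, one has |∑_{i=1}^r h_i b_i| ≤ M ‖∑_{i=1}^r h_i a_i‖_p. Then there exists x = (x_j)_{j=1}^∞ ∈ ℓ^q with ‖x‖_q ≤ M and ∑_{j=1}^∞ a_{i,j} x_j = b_i for all i ∈ ℕ. -/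
open scoped ENNReal

/-!
The assignment `∑ h_i a_i ↦ ∑ h_i b_i` is well defined on the span of the `a_i` and bounded
by `M`, so Hahn–Banach extends it to a functional `F` on `ℓ^p` with `‖F‖ ≤ M` and
`F a_i = b_i`. Every such functional is represented by `x_j = F e_j`: testing `F` against
`y_j = conj x_j |x_j|^(q-2)` on finite sets gives `‖x‖_q ≤ ‖F‖` (for `q = ∞`, against
`e_j`), and `F a = ∑ a_j x_j` because `a = ∑ a_j e_j` in `ℓ^p` for `p < ∞`.
-/

open scoped ComplexConjugate

namespace IsHolderConjugatePair

variable {p q : ℝ≥0∞}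

theorem holderConjugate_s9 (h : IsHolderConjugatePair p q) : p.HolderConjugate q := by
  rcases h with ⟨-, -, -, -, h⟩ | ⟨rfl, rfl⟩
  · exact ENNReal.holderConjugate_iff.2 (by simpa only [one_div] using h)
  · infer_instance

theorem ne_top_s9 (h : IsHolderConjugatePair p q) : p ≠ ∞ := by
  rcases h with ⟨-, h, -⟩ | ⟨rfl, -⟩
  · exact h
  · exact ENNReal.one_ne_top

end IsHolderConjugatePair

theorem Real.HolderConjugate.le_rpow_of_le_mul_rpow_inv {p q S C : ℝ} (hpq : p.HolderConjugate q)
    (hS : 0 ≤ S) (hC : 0 ≤ C) (h : S ≤ C * S ^ p⁻¹) : S ≤ C ^ q := by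
  rcases hS.eq_or_lt with rfl | hS
  · positivity
  have hsplit : S ^ q⁻¹ * S ^ p⁻¹ = S := by
    rw [← Real.rpow_add hS, add_comm, hpq.inv_add_inv_eq_one, Real.rpow_one]
  have hroot : S ^ q⁻¹ ≤ C :=
    le_of_mul_le_mul_right (hsplit.trans_le h) (Real.rpow_pos_of_pos hS _)
  calc S = (S ^ q⁻¹) ^ q := (Real.rpow_inv_rpow hS.le hpq.symm.ne_zero).symm
    _ ≤ C ^ q := Real.rpow_le_rpow (by positivity) hroot hpq.symm.nonneg

namespace RCLike

variable {𝕜 : Type*} [RCLike 𝕜]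

theorem conj_mul_rpow_mul_self (z : 𝕜) {r : ℝ} (hr : r ≠ 0) :
    conj z * ((‖z‖ ^ (r - 2) : ℝ) : 𝕜) * z = ((‖z‖ ^ r : ℝ) : 𝕜) := by
  rw [mul_right_comm, conj_mul, ← ofReal_pow, ← ofReal_mul, ← Real.rpow_natCast,
    ← Real.rpow_add' (norm_nonneg z) (by simpa using hr)]
  norm_num

theorem norm_conj_mul_rpow (z : 𝕜) {r : ℝ} (hr : r ≠ 1) :
    ‖conj z * ((‖z‖ ^ (r - 2) : ℝ) : 𝕜)‖ = ‖z‖ ^ (r - 1) := by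
  rw [norm_mul, norm_conj, norm_ofReal, abs_of_nonneg (by positivity),
    ← Real.rpow_one_add' (norm_nonneg z) (by contrapose! hr; linarith)]
  ring_nf

end RCLike

theorem LinearMap.exists_comp_rangeRestrict_eq {R M N P : Type*} [Ring R] [AddCommGroup M]
    [AddCommGroup N] [AddCommGroup P] [Module R M] [Module R N] [Module R P]
    (f : M →ₗ[R] N) (g : M →ₗ[R] P) (h : ker f ≤ ker g) :
    ∃ g' : range f →ₗ[R] P, g' ∘ₗ f.rangeRestrict = g :=
  ⟨(ker f).liftQ g h ∘ₗ f.quotKerEquivRange.symm.toLinearMap, by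
    ext x
    simp only [comp_apply, LinearEquiv.coe_coe]
    rw [show f.rangeRestrict x = ⟨f x, mem_range_self f x⟩ from rfl,
      quotKerEquivRange_symm_apply_image]
    rfl⟩

theorem exists_strongDual_comp_eq_of_norm_le {𝕜 V E : Type*} [RCLike 𝕜] [AddCommGroup V]
    [Module 𝕜 V] [NormedAddCommGroup E] [NormedSpace 𝕜 E] (T : V →ₗ[𝕜] E) (S : V →ₗ[𝕜] 𝕜)
    {M : ℝ} (hM : 0 ≤ M) (h : ∀ v, ‖S v‖ ≤ M * ‖T v‖) :
    ∃ F : StrongDual 𝕜 E, ‖F‖ ≤ M ∧ ∀ v, F (T v) = S v := by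
  obtain ⟨g, hg⟩ := T.exists_comp_rangeRestrict_eq S fun v hv => by
    simpa [LinearMap.mem_ker.1 hv] using h v
  have hgM : ∀ w, ‖g w‖ ≤ M * ‖w‖ := by
    rintro ⟨_, v, rfl⟩
    rw [← hg] at h
    exact h v
  obtain ⟨F, hFg, hF⟩ := exists_extension_norm_eq _ (g.mkContinuous M hgM)
  refine ⟨F, hF ▸ g.mkContinuous_norm_le hM hgM, fun v => ?_⟩
  rw [← hg]
  exact hFg (T.rangeRestrict v)

theorem Finsupp.linearCombination_eq_sum_fin {R M : Type*} [Semiring R] [AddCommMonoid M]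
    [Module R M] (v : ℕ → M) {c : ℕ →₀ R} {r : ℕ} (hr : c.support ⊆ Finset.range r) :
    linearCombination R v c = ∑ i : Fin r, c i • v i := by
  rw [Fin.sum_univ_eq_sum_range (fun i => c i • v i), linearCombination_apply,
    Finsupp.sum_of_support_subset c hr _ fun i _ => zero_smul R (v i)]

theorem norm_linearCombination_le_of_forall_fin {𝕜 E : Type*} [RCLike 𝕜] [NormedAddCommGroup E]
    [Module 𝕜 E] {a : ℕ → E} {b : ℕ → 𝕜} {M : ℝ}
    (h : ∀ (r : ℕ) (c : Fin r → 𝕜), ‖∑ i : Fin r, c i * b i‖ ≤ M * ‖∑ i : Fin r, c i • a i‖)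
    (c : ℕ →₀ 𝕜) :
    ‖Finsupp.linearCombination 𝕜 b c‖ ≤ M * ‖Finsupp.linearCombination 𝕜 a c‖ := by
  obtain ⟨r, hr⟩ := c.support.exists_nat_subset_range
  rw [Finsupp.linearCombination_eq_sum_fin b hr, Finsupp.linearCombination_eq_sum_fin a hr]
  exact h r fun i => c i

namespace lp

variable {α 𝕜 : Type*} [DecidableEq α] [RCLike 𝕜] {p q : ℝ≥0∞} [Fact (1 ≤ p)]

noncomputable def dualSeq (F : StrongDual 𝕜 (lp (fun _ : α => 𝕜) p)) (j : α) : 𝕜 :=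
  F (lp.single p j 1)

variable (F : StrongDual 𝕜 (lp (fun _ : α => 𝕜) p))

theorem apply_single_eq_mul_dualSeq (j : α) (c : 𝕜) : F (lp.single p j c) = c * dualSeq F j := by
  rw [dualSeq, ← smul_eq_mul, ← map_smul, ← lp.single_smul, smul_eq_mul, mul_one]

theorem hasSum_mul_dualSeq (hp : p ≠ ∞) (y : lp (fun _ : α => 𝕜) p) :
    HasSum (fun j => y j * dualSeq F j) (F y) := by
  simpa only [apply_single_eq_mul_dualSeq] using F.hasSum (lp.hasSum_single hp y)

theorem norm_dualSeq_le (j : α) : ‖dualSeq F j‖ ≤ ‖F‖ := by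
  simpa [dualSeq, lp.norm_single (zero_lt_one.trans_le Fact.out)] using
    F.le_opNorm (lp.single p j 1)

theorem sum_norm_dualSeq_rpow_le [p.HolderConjugate q] (hp : p ≠ ∞) (hq : q ≠ ∞)
    (s : Finset α) : ∑ j ∈ s, ‖dualSeq F j‖ ^ q.toReal ≤ ‖F‖ ^ q.toReal := by
  have hpq := ENNReal.HolderConjugate.toReal_of_ne_top hp hq
  set S := ∑ j ∈ s, ‖dualSeq F j‖ ^ q.toReal
  have hS : 0 ≤ S := by positivity
  let y : lp (fun _ : α => 𝕜) p :=
    ∑ j ∈ s, lp.single p j (conj (dualSeq F j) * ((‖dualSeq F j‖ ^ (q.toReal - 2) : ℝ) : 𝕜))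
  have hFy : F y = S := by
    simp only [y, S, map_sum, apply_single_eq_mul_dualSeq,
      RCLike.conj_mul_rpow_mul_self _ hpq.symm.ne_zero]
  have hy : ‖y‖ = S ^ p.toReal⁻¹ := by
    rw [← Real.rpow_rpow_inv (norm_nonneg y) hpq.ne_zero, lp.norm_sum_single hpq.pos]
    congr 1
    refine Finset.sum_congr rfl fun j _ => ?_
    rw [RCLike.norm_conj_mul_rpow _ hpq.symm.lt.ne', ← Real.rpow_mul (norm_nonneg _),
      hpq.symm.sub_one_mul_conj]
  refine hpq.le_rpow_of_le_mul_rpow_inv hS (norm_nonneg F) ?_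
  calc S = ‖F y‖ := by rw [hFy, RCLike.norm_ofReal, abs_of_nonneg hS]
    _ ≤ ‖F‖ * ‖y‖ := F.le_opNorm y
    _ = ‖F‖ * S ^ p.toReal⁻¹ := by rw [hy]

theorem exists_norm_le_coe_eq_dualSeq [p.HolderConjugate q] (hp : p ≠ ∞) :
    ∃ x : lp (fun _ : α => 𝕜) q, ‖x‖ ≤ ‖F‖ ∧ ⇑x = dualSeq F := by
  rcases eq_or_ne q ∞ with rfl | hq
  · exact ⟨⟨dualSeq F, memℓp_infty ⟨‖F‖, by rintro _ ⟨j, rfl⟩; exact norm_dualSeq_le F j⟩⟩,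
      lp.norm_le_of_forall_le (norm_nonneg F) (norm_dualSeq_le F), rfl⟩
  · have hq₀ : 0 < q.toReal := ENNReal.toReal_pos (ENNReal.HolderConjugate.ne_zero q p) hq
    exact ⟨⟨dualSeq F, memℓp_gen' (sum_norm_dualSeq_rpow_le F hp hq)⟩,
      lp.norm_le_of_forall_sum_le hq₀ (norm_nonneg F) (sum_norm_dualSeq_rpow_le F hp hq), rfl⟩

end lp

/-- **F. Riesz's theorem** ((b) implies (c)): if for every `r` and all scalars
`h_1, …, h_r` one has `‖∑ i, h i * b i‖ ≤ M * ‖∑ i, h i • a i‖_p`, then there exists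
`x ∈ ℓ^q` with `‖x‖_q ≤ M` and `∑' j, a i j * x j = b i` for all `i`. -/
theorem riesz_b_implies_c {𝕜 : Type*} [RCLike 𝕜] (p q : ℝ≥0∞)
    (hpq : IsHolderConjugatePair p q) (M : ℝ) (hM : 0 < M)
    (a : ℕ → lp (fun _ : ℕ => 𝕜) p) (b : ℕ → 𝕜)
    (hineq : ∀ (r : ℕ) (h : Fin r → 𝕜),
      ‖∑ i : Fin r, h i * b i‖ ≤ M * ‖∑ i : Fin r, h i • a i‖) :
    ∃ x : lp (fun _ : ℕ => 𝕜) q,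
      ‖x‖ ≤ M ∧ ∀ i : ℕ, ∑' j : ℕ, a i j * x j = b i := by
  have : p.HolderConjugate q := hpq.holderConjugate_s9
  have : Fact (1 ≤ p) := ⟨ENNReal.HolderConjugate.one_le p q⟩
  obtain ⟨F, hFM, hF⟩ := exists_strongDual_comp_eq_of_norm_le _ _ hM.le
    (norm_linearCombination_le_of_forall_fin hineq)
  obtain ⟨x, hxF, hx⟩ := lp.exists_norm_le_coe_eq_dualSeq (q := q) F hpq.ne_top_s9
  refine ⟨x, hxF.trans hFM, fun i => ?_⟩
  have hFa : F (a i) = b i := by simpa using hF (Finsupp.single i 1)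
  rw [hx, ← hFa]
  exact (lp.hasSum_mul_dualSeq F hpq.ne_top_s9 (a i)).tsum_eq
end
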